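/- arXiv:2601.13823 — 5 statements merged into one kernel-verified Lean document; each statement's English description precedes it below -/
import Mathlib

section
/- Let κ₁, κ₂ ∈ ℝ and let D : ℝ³ \ {0} → ℂ be the difference kernel D(x) = (exp(−ι κ₁ ‖x‖) − exp(−ι κ₂ ‖x‖)) / (4π ‖x‖). Then D is differentiable at every x ≠ 0, and there exists a constant C > 0 such that for all x with 0 < ‖x‖ ≤ 1, the operator norm of the Fréchet derivative of D at x is bounded by C. In particular, the difference of the gradients of the Helmholtz kernels for two wavenumbers (the double-layer kernel difference) is bounded near the origin. -/
/-!
Write `D x = F ‖x‖` with `F r = g r / (4 π r)` and `g r = exp (-i κ₁ r) - exp (-i κ₂ r)`. Then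
`F' r = (r g' r - g r) / (4 π r²)`, and because `g 0 = 0` the numerator is a Taylor remainder:
it vanishes at `0` and has derivative `r g'' r`, so it is at most `(κ₁² + κ₂²) r²` in norm.
Hence `‖F'‖ ≤ (κ₁² + κ₂²) / (4 π)` on all of `(0, ∞)`, and composing with the `1`-Lipschitz
norm bounds the Fréchet derivative of `D` by the same constant.
-/

open Complex Set

theorem norm_smul_deriv_sub_sub_le {E : Type*} [NormedAddCommGroup E] [NormedSpace ℝ E]
    {g g' g'' : ℝ → E} {M r : ℝ} (hr : 0 ≤ r)
    (hg : ∀ s ∈ Icc 0 r, HasDerivAt g (g' s) s) (hg' : ∀ s ∈ Icc 0 r, HasDerivAt g' (g'' s) s)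
    (hM : ∀ s ∈ Ico 0 r, ‖g'' s‖ ≤ M) :
    ‖r • g' r - (g r - g 0)‖ ≤ M * r ^ 2 := by
  have hderiv : ∀ s ∈ Icc 0 r,
      HasDerivWithinAt (fun t => t • g' t - g t) (s • g'' s) (Icc 0 r) s := by
    intro s hs
    have := ((hasDerivAt_id s).smul (hg' s hs)).sub (hg s hs)
    simp only [id, one_smul, add_sub_cancel_right] at this
    exact this.hasDerivWithinAt
  have hbound : ∀ s ∈ Ico 0 r, ‖s • g'' s‖ ≤ r * M := by
    intro s hs
    rw [norm_smul, Real.norm_of_nonneg hs.1]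
    exact mul_le_mul hs.2.le (hM s hs) (norm_nonneg _) hr
  have := norm_image_sub_le_of_norm_deriv_le_segment' hderiv hbound r (right_mem_Icc.2 hr)
  calc ‖r • g' r - (g r - g 0)‖ = ‖r • g' r - g r - ((0 : ℝ) • g' 0 - g 0)‖ := by
        congr 1; rw [zero_smul]; abel
    _ ≤ r * M * (r - 0) := this
    _ = M * r ^ 2 := by ring

theorem hasDerivAt_div_const_mul_ofReal {g : ℝ → ℂ} {g' a : ℂ} {r : ℝ}
    (hg : HasDerivAt g g' r) (ha : a ≠ 0) (hr : r ≠ 0) :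
    HasDerivAt (fun s : ℝ => g s / (a * s)) ((r * g' - g r) / (a * r ^ 2)) r := by
  have hden : HasDerivAt (fun s : ℝ => a * (s : ℂ)) a r := by
    simpa using (hasDerivAt_id (r : ℂ)).comp_ofReal.const_mul a
  refine (hg.div hden (mul_ne_zero ha (ofReal_ne_zero.2 hr))).congr_deriv ?_
  field_simp

theorem norm_mul_deriv_sub_div_le {g g' g'' : ℝ → ℂ} {M r : ℝ} (a : ℂ) (hr : 0 < r)
    (hg : ∀ s ∈ Icc 0 r, HasDerivAt g (g' s) s) (hg' : ∀ s ∈ Icc 0 r, HasDerivAt g' (g'' s) s)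
    (hM : ∀ s ∈ Ico 0 r, ‖g'' s‖ ≤ M) (h0 : g 0 = 0) :
    ‖(r * g' r - g r) / (a * r ^ 2)‖ ≤ M / ‖a‖ := by
  have key := norm_smul_deriv_sub_sub_le hr.le hg hg' hM
  rw [h0, sub_zero, real_smul] at key
  rw [norm_div, norm_mul, norm_pow, norm_real, Real.norm_of_nonneg hr.le]
  calc ‖(r : ℂ) * g' r - g r‖ / (‖a‖ * r ^ 2) ≤ M * r ^ 2 / (‖a‖ * r ^ 2) := by gcongr
    _ = M / ‖a‖ := by rw [mul_comm ‖a‖, ← div_div, mul_div_cancel_right₀ _ (by positivity)]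

theorem norm_fderiv_comp_le_of_lipschitzWith {E F : Type*}
    [NormedAddCommGroup E] [NormedSpace ℝ E] [NormedAddCommGroup F] [NormedSpace ℝ F]
    {φ : ℝ → F} {φ' : F} {f : E → ℝ} {K : NNReal} {x : E}
    (hf : LipschitzWith K f) (hfx : DifferentiableAt ℝ f x) (hφ : HasDerivAt φ φ' (f x)) :
    ‖fderiv ℝ (φ ∘ f) x‖ ≤ ‖φ'‖ * K := by
  rw [(hφ.hasFDerivAt.comp x hfx.hasFDerivAt).fderiv]
  refine (ContinuousLinearMap.opNorm_comp_le _ _).trans ?_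
  rw [ContinuousLinearMap.norm_toSpanSingleton]
  gcongr
  exact norm_fderiv_le_of_lipschitz ℝ hf

theorem hasDerivAt_cexp_mul_ofReal (c : ℂ) (s : ℝ) :
    HasDerivAt (fun t : ℝ => exp (c * t)) (c * exp (c * s)) s := by
  simpa [mul_comm] using ((hasDerivAt_id (s : ℂ)).const_mul c).cexp.comp_ofReal

theorem norm_cexp_neg_I_mul_ofReal_mul (κ s : ℝ) : ‖exp (-I * κ * s)‖ = 1 := by
  rw [show -I * κ * s = ((-(κ * s) : ℝ) : ℂ) * I by push_cast; ring, norm_exp_ofReal_mul_I]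

noncomputable def helmholtzKernelDiffRadial (κ₁ κ₂ r : ℝ) : ℂ :=
  (exp (-I * κ₁ * r) - exp (-I * κ₂ * r)) / (4 * Real.pi * r)

theorem exists_hasDerivAt_helmholtzKernelDiffRadial_norm_le (κ₁ κ₂ : ℝ) {r : ℝ} (hr : 0 < r) :
    ∃ F', HasDerivAt (helmholtzKernelDiffRadial κ₁ κ₂) F' r ∧
      ‖F'‖ ≤ (κ₁ ^ 2 + κ₂ ^ 2) / (4 * Real.pi) := by
  set c₁ : ℂ := -I * κ₁
  set c₂ : ℂ := -I * κ₂
  have hg (s : ℝ) : HasDerivAt (fun t : ℝ => exp (c₁ * t) - exp (c₂ * t))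
      (c₁ * exp (c₁ * s) - c₂ * exp (c₂ * s)) s :=
    (hasDerivAt_cexp_mul_ofReal c₁ s).sub (hasDerivAt_cexp_mul_ofReal c₂ s)
  have hg' (s : ℝ) : HasDerivAt (fun t : ℝ => c₁ * exp (c₁ * t) - c₂ * exp (c₂ * t))
      (c₁ * (c₁ * exp (c₁ * s)) - c₂ * (c₂ * exp (c₂ * s))) s :=
    ((hasDerivAt_cexp_mul_ofReal c₁ s).const_mul c₁).sub
      ((hasDerivAt_cexp_mul_ofReal c₂ s).const_mul c₂)
  have hg'' (s : ℝ) :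
      ‖c₁ * (c₁ * exp (c₁ * s)) - c₂ * (c₂ * exp (c₂ * s))‖ ≤ κ₁ ^ 2 + κ₂ ^ 2 := by
    have hc (κ : ℝ) : ‖-I * κ‖ = |κ| := by simp
    refine (norm_sub_le _ _).trans_eq ?_
    simp only [norm_mul, c₁, c₂, hc, norm_cexp_neg_I_mul_ofReal_mul, mul_one, abs_mul_abs_self, sq]
  have h4π : (4 * Real.pi : ℂ) ≠ 0 := by
    exact_mod_cast (by positivity : (4 * Real.pi : ℝ) ≠ 0)
  refine ⟨_, hasDerivAt_div_const_mul_ofReal (hg r) h4π hr.ne', ?_⟩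
  have := norm_mul_deriv_sub_div_le (4 * Real.pi) hr (fun s _ => hg s) (fun s _ => hg' s)
    (fun s _ => hg'' s) (by simp)
  rwa [show ‖(4 * Real.pi : ℂ)‖ = 4 * Real.pi by simp [abs_of_pos Real.pi_pos]] at this

/-- The difference kernel D of the Helmholtz fundamental solutions for two
wavenumbers is differentiable away from the origin, and its Fréchet derivative is bounded
on the punctured unit ball: there is C > 0 with ‖D′(x)‖ ≤ C for 0 < ‖x‖ ≤ 1. -/
theorem helmholtz_kernel_difference_derivative_bounded
    (κ₁ κ₂ : ℝ) (D : EuclideanSpace ℝ (Fin 3) → ℂ)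
    (hD : ∀ x : EuclideanSpace ℝ (Fin 3), x ≠ 0 →
      D x = (Complex.exp (-(Complex.I) * (κ₁ : ℂ) * (‖x‖ : ℂ)) -
             Complex.exp (-(Complex.I) * (κ₂ : ℂ) * (‖x‖ : ℂ))) /
            (4 * (Real.pi : ℂ) * (‖x‖ : ℂ))) :
    (∀ x : EuclideanSpace ℝ (Fin 3), x ≠ 0 → DifferentiableAt ℝ D x) ∧
    ∃ C : ℝ, 0 < C ∧ ∀ x : EuclideanSpace ℝ (Fin 3), 0 < ‖x‖ → ‖x‖ ≤ 1 →
      ‖fderiv ℝ D x‖ ≤ C := by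
  have hradial {x : EuclideanSpace ℝ (Fin 3)} (hx : x ≠ 0) :
      D =ᶠ[nhds x] helmholtzKernelDiffRadial κ₁ κ₂ ∘ norm :=
    eventually_ne_nhds hx |>.mono fun y hy => hD y hy
  have hnorm {x : EuclideanSpace ℝ (Fin 3)} (hx : x ≠ 0) : DifferentiableAt ℝ norm x :=
    (contDiffAt_norm ℝ hx).differentiableAt one_ne_zero
  refine ⟨fun x hx => ?_, (κ₁ ^ 2 + κ₂ ^ 2) / (4 * Real.pi) + 1, by positivity, fun x hx _ => ?_⟩
  · obtain ⟨F', hF', -⟩ :=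
      exists_hasDerivAt_helmholtzKernelDiffRadial_norm_le κ₁ κ₂ (norm_pos_iff.2 hx)
    exact (hradial hx).differentiableAt_iff.2 (hF'.differentiableAt.comp x (hnorm hx))
  · obtain ⟨F', hF', hF'le⟩ := exists_hasDerivAt_helmholtzKernelDiffRadial_norm_le κ₁ κ₂ hx
    have hx0 : x ≠ 0 := norm_pos_iff.1 hx
    rw [(hradial hx0).fderiv_eq]
    calc ‖fderiv ℝ (helmholtzKernelDiffRadial κ₁ κ₂ ∘ norm) x‖ ≤ ‖F'‖ * (1 : NNReal) :=
          norm_fderiv_comp_le_of_lipschitzWith lipschitzWith_one_norm (hnorm hx0) hF'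
      _ ≤ (κ₁ ^ 2 + κ₂ ^ 2) / (4 * Real.pi) + 1 := by
          rw [NNReal.coe_one, mul_one]; linarith
end

section
/- Let κ₁, κ₂ ∈ ℝ and let D : ℝ³ \ {0} → ℂ be the difference kernel D(x) = (exp(−ι κ₁ ‖x‖) − exp(−ι κ₂ ‖x‖)) / (4π ‖x‖). Then there exists a constant C > 0 such that for all x with 0 < ‖x‖ ≤ 1, the norm of the second iterated Fréchet derivative of D at x is bounded by C / ‖x‖. In particular, the second derivatives of the difference kernel are only weakly singular at the origin, which is the mechanism by which the weighted combination of two hyper-singular (grad–div) single-layer contributions in the Müller formulation becomes a weakly singular, second-kind operator. -/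
/-!
Away from the origin `D x = φ ‖x‖` with `φ r = (exp (-ι κ₁ r) - exp (-ι κ₂ r)) / (4 π r)`.
The numerator vanishes at `r = 0`, so the two `1 / r` singularities cancel and `φ` extends
analytically across `0` (as a `dslope`). By the chain rule, the second derivative of `φ ∘ ‖·‖`
at `x` is built from `φ'`, `φ''` at `‖x‖` (bounded for `‖x‖ ≤ 1`), the first derivative of the
norm (of norm at most `1`) and its second derivative. The latter is homogeneous of degree `-1`,
hence bounded by `M / ‖x‖` with `M` a bound on the unit sphere.
-/

open Filter Set Metric Topology

section DSlope

variable {𝕜 E : Type*} [NontriviallyNormedField 𝕜] [NormedAddCommGroup E] [NormedSpace 𝕜 E]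
  {f : 𝕜 → E} {s : Set 𝕜} {a : 𝕜}

theorem AnalyticOnNhd.dslope (hf : AnalyticOnNhd 𝕜 f s) (ha : a ∈ s) :
    AnalyticOnNhd 𝕜 (dslope f a) s := by
  intro b hb
  rcases eq_or_ne b a with rfl | hba
  · obtain ⟨p, hp⟩ := hf b hb
    exact ⟨p.fslope, hp.has_fpower_series_dslope_fslope⟩
  · refine AnalyticAt.congr ?_ (dslope_eventuallyEq_slope_of_ne f hba).symm
    simp only [slope_fun_def]
    exact ((analyticAt_id.sub analyticAt_const).inv (sub_ne_zero.2 hba)).smul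
      ((hf b hb).sub analyticAt_const)

end DSlope

section Norm

variable {E : Type*} [NormedAddCommGroup E]

theorem fderiv_fderiv_norm_smul_pos [NormedSpace ℝ E] {t : ℝ} (ht : 0 < t) (x : E) :
    fderiv ℝ (fderiv ℝ (‖·‖)) (t • x) = t⁻¹ • fderiv ℝ (fderiv ℝ (‖·‖)) x := by
  have hinv : (fun y : E => fderiv ℝ (‖·‖) (t • y)) = fderiv ℝ (‖·‖) :=
    funext fun y => fderiv_norm_smul_pos ht
  have hcomp := fderiv_comp_smul (𝕜 := ℝ) (f := fderiv ℝ (‖·‖ : E → ℝ)) (x := x) t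
  rw [hinv] at hcomp
  rw [hcomp, smul_smul, inv_mul_cancel₀ ht.ne', one_smul]

theorem exists_norm_fderiv_fderiv_norm_le [InnerProductSpace ℝ E] [ProperSpace E] :
    ∃ M, ∀ x : E, x ≠ 0 → ‖fderiv ℝ (fderiv ℝ (‖·‖)) x‖ ≤ M / ‖x‖ := by
  have hcont : ContinuousOn (fun z => ‖fderiv ℝ (fderiv ℝ (‖·‖ : E → ℝ)) z‖) (sphere 0 1) := by
    intro z hz
    have hz0 : z ≠ 0 := ne_zero_of_mem_unit_sphere ⟨z, hz⟩
    exact (((contDiffAt_norm ℝ (n := 2) hz0).fderiv_right (m := 1) le_rfl).fderiv_right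
      (m := 0) le_rfl).continuousAt.norm.continuousWithinAt
  obtain ⟨M, hM⟩ := (isCompact_sphere (0 : E) 1).bddAbove_image hcont
  refine ⟨M, fun x hx => ?_⟩
  have hnx : 0 < ‖x‖ := norm_pos_iff.2 hx
  have hu : ‖x‖⁻¹ • x ∈ sphere (0 : E) 1 := by
    simp [norm_smul, hnx.ne']
  calc ‖fderiv ℝ (fderiv ℝ (‖·‖)) x‖
      = ‖fderiv ℝ (fderiv ℝ (‖·‖)) (‖x‖ • ‖x‖⁻¹ • x)‖ := by
        rw [smul_smul, mul_inv_cancel₀ hnx.ne', one_smul]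
    _ ≤ ‖x‖⁻¹ * ‖fderiv ℝ (fderiv ℝ (‖·‖)) (‖x‖⁻¹ • x)‖ := by
        rw [fderiv_fderiv_norm_smul_pos hnx]
        simpa only [norm_inv, norm_norm] using ContinuousLinearMap.opNorm_smul_le ‖x‖⁻¹
          (fderiv ℝ (fderiv ℝ (‖·‖ : E → ℝ)) (‖x‖⁻¹ • x))
    _ ≤ ‖x‖⁻¹ * M := by gcongr; exact hM (mem_image_of_mem _ hu)
    _ = M / ‖x‖ := inv_mul_eq_div _ _

end Norm

section Bounds

variable {𝕜 E F : Type*} [NontriviallyNormedField 𝕜] [NormedAddCommGroup E] [NormedSpace 𝕜 E]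
  [NormedAddCommGroup F] [NormedSpace 𝕜 F] {f : E → F} {n : ℕ} {K : Set E}

theorem ContDiff.exists_bound_iteratedFDeriv_of_isCompact (hf : ContDiff 𝕜 n f)
    (hK : IsCompact K) :
    ∃ C, ∀ i ≤ n, ∀ x ∈ K, ‖iteratedFDeriv 𝕜 i f x‖ ≤ C := by
  have hcont : Continuous fun x => ∑ i ∈ Finset.range (n + 1), ‖iteratedFDeriv 𝕜 i f x‖ :=
    continuous_finsetSum _ fun i hi =>
      (hf.continuous_iteratedFDeriv (by exact_mod_cast Finset.mem_range_succ_iff.1 hi)).norm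
  obtain ⟨C, hC⟩ := hK.bddAbove_image hcont.continuousOn
  exact ⟨C, fun i hi x hx => (Finset.single_le_sum (f := fun j => ‖iteratedFDeriv 𝕜 j f x‖)
    (fun j _ => norm_nonneg _) (Finset.mem_range_succ_iff.2 hi)).trans
    (hC (mem_image_of_mem _ hx))⟩

theorem norm_iteratedFDeriv_two (f : E → F) (x : E) :
    ‖iteratedFDeriv 𝕜 2 f x‖ = ‖fderiv 𝕜 (fderiv 𝕜 f) x‖ := by
  rw [← norm_iteratedFDeriv_fderiv (n := 1), norm_iteratedFDeriv_one]

end Bounds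

section Radial

variable {E F : Type*} [NormedAddCommGroup E] [InnerProductSpace ℝ E] [ProperSpace E]
  [NormedAddCommGroup F] [NormedSpace ℝ F]

theorem exists_norm_fderiv_fderiv_comp_norm_le {φ : ℝ → F} (hφ : ContDiff ℝ 2 φ) :
    ∃ C, 0 < C ∧ ∀ x : E, 0 < ‖x‖ → ‖x‖ ≤ 1 →
      ‖fderiv ℝ (fderiv ℝ (φ ∘ (‖·‖))) x‖ ≤ C / ‖x‖ := by
  obtain ⟨A, hA⟩ :=
    hφ.exists_bound_iteratedFDeriv_of_isCompact (isCompact_Icc (a := (0 : ℝ)) (b := 1))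
  obtain ⟨M, hM⟩ := exists_norm_fderiv_fderiv_norm_le (E := E)
  refine ⟨2 * max A 1 * max M 1, by positivity, fun x hx0 hx1 => ?_⟩
  have hx : x ∈ ({0}ᶜ : Set E) := norm_pos_iff.1 hx0
  have hopen : IsOpen ({0}ᶜ : Set E) := isOpen_compl_singleton
  have hKx : 1 ≤ max M 1 / ‖x‖ := (one_le_div hx0).2 (hx1.trans (le_max_right _ _))
  have hφbound : ∀ i ≤ 2, ‖iteratedFDerivWithin ℝ i φ univ ‖x‖‖ ≤ max A 1 := by
    intro i hi
    rw [iteratedFDerivWithin_univ]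
    exact (hA i hi _ ⟨norm_nonneg x, hx1⟩).trans (le_max_left _ _)
  -- Faà di Bruno wants `‖Dⁱ‖·‖‖ ≤ dⁱ`; `d = √(max M 1 / ‖x‖) ≥ 1` works because `‖x‖ ≤ 1`.
  have hnormbound : ∀ i, 1 ≤ i → i ≤ 2 →
      ‖iteratedFDerivWithin ℝ i (‖·‖) {0}ᶜ x‖ ≤ √(max M 1 / ‖x‖) ^ i := by
    intro i hi1 hi2
    rw [iteratedFDerivWithin_of_isOpen i hopen hx]
    interval_cases i
    · rw [norm_iteratedFDeriv_one, pow_one]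
      have hlip := norm_fderiv_le_of_lipschitz ℝ (lipschitzWith_one_norm (E := E)) (x₀ := x)
      exact (NNReal.coe_one ▸ hlip).trans (Real.one_le_sqrt.2 hKx)
    · rw [norm_iteratedFDeriv_two, Real.sq_sqrt (by positivity)]
      exact (hM x (norm_pos_iff.1 hx0)).trans (by gcongr; exact le_max_left _ _)
  have hchain := norm_iteratedFDerivWithin_comp_le (s := {0}ᶜ) (t := univ) hφ.contDiffOn
    (fun z hz => (contDiffAt_norm ℝ hz).contDiffWithinAt) le_rfl uniqueDiffOn_univ
    hopen.uniqueDiffOn (mapsTo_univ _ _) hx hφbound hnormbound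
  rw [iteratedFDerivWithin_of_isOpen 2 hopen hx, norm_iteratedFDeriv_two,
    Real.sq_sqrt (by positivity)] at hchain
  simpa [mul_div_assoc] using hchain

end Radial

noncomputable def helmholtzDifferenceProfile (κ₁ κ₂ : ℝ) : ℝ → ℂ :=
  dslope (fun r : ℝ =>
    (Complex.exp (-(Complex.I) * κ₁ * r) - Complex.exp (-(Complex.I) * κ₂ * r)) /
      (4 * (Real.pi : ℂ))) 0

theorem analyticAt_cexp_mul_ofReal (c : ℂ) (r : ℝ) :
    AnalyticAt ℝ (fun t : ℝ => Complex.exp (c * t)) r :=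
  analyticAt_cexp.restrictScalars.comp (analyticAt_const.mul (Complex.ofRealCLM.analyticAt r))

theorem contDiff_helmholtzDifferenceProfile (κ₁ κ₂ : ℝ) {n : WithTop ℕ∞} :
    ContDiff ℝ n (helmholtzDifferenceProfile κ₁ κ₂) :=
  (AnalyticOnNhd.dslope (fun r _ => ((analyticAt_cexp_mul_ofReal _ r).sub
    (analyticAt_cexp_mul_ofReal _ r)).div_const) (mem_univ 0)).contDiff

theorem helmholtzDifferenceProfile_of_ne_zero (κ₁ κ₂ : ℝ) {r : ℝ} (hr : r ≠ 0) :
    helmholtzDifferenceProfile κ₁ κ₂ r =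
      (Complex.exp (-(Complex.I) * κ₁ * r) - Complex.exp (-(Complex.I) * κ₂ * r)) /
        (4 * (Real.pi : ℂ) * r) := by
  rw [helmholtzDifferenceProfile, dslope_of_ne _ hr, slope_def_module]
  simp only [Complex.ofReal_zero, mul_zero, Complex.exp_zero, sub_self, zero_div, sub_zero,
    Complex.real_smul, Complex.ofReal_inv]
  field_simp

/-- The second iterated Fréchet derivative of the Helmholtz difference kernel D
is only weakly singular at the origin: D and fderiv ℝ D are differentiable away from 0, and
there is C > 0 with ‖fderiv ℝ (fderiv ℝ D) x‖ ≤ C / ‖x‖ for 0 < ‖x‖ ≤ 1. -/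
theorem helmholtz_kernel_difference_second_derivative_weakly_singular
    (κ₁ κ₂ : ℝ) (D : EuclideanSpace ℝ (Fin 3) → ℂ)
    (hD : ∀ x : EuclideanSpace ℝ (Fin 3), x ≠ 0 →
      D x = (Complex.exp (-(Complex.I) * (κ₁ : ℂ) * (‖x‖ : ℂ)) -
             Complex.exp (-(Complex.I) * (κ₂ : ℂ) * (‖x‖ : ℂ))) /
            (4 * (Real.pi : ℂ) * (‖x‖ : ℂ))) :
    (∀ x : EuclideanSpace ℝ (Fin 3), x ≠ 0 → DifferentiableAt ℝ D x) ∧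
    (∀ x : EuclideanSpace ℝ (Fin 3), x ≠ 0 → DifferentiableAt ℝ (fderiv ℝ D) x) ∧
    ∃ C : ℝ, 0 < C ∧ ∀ x : EuclideanSpace ℝ (Fin 3), 0 < ‖x‖ → ‖x‖ ≤ 1 →
      ‖fderiv ℝ (fderiv ℝ D) x‖ ≤ C / ‖x‖ := by
  have hφ : ContDiff ℝ 2 (helmholtzDifferenceProfile κ₁ κ₂) :=
    contDiff_helmholtzDifferenceProfile κ₁ κ₂
  have hDφ : ∀ x : EuclideanSpace ℝ (Fin 3), x ≠ 0 →
      D =ᶠ[𝓝 x] helmholtzDifferenceProfile κ₁ κ₂ ∘ (‖·‖) := fun x hx =>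
    eventually_of_mem (isOpen_compl_singleton.mem_nhds hx) fun y hy => by
      rw [hD y hy, Function.comp_apply,
        helmholtzDifferenceProfile_of_ne_zero κ₁ κ₂ (norm_ne_zero_iff.2 hy)]
  have hsmooth : ∀ x : EuclideanSpace ℝ (Fin 3), x ≠ 0 → ContDiffAt ℝ 2 D x := fun x hx =>
    (hφ.contDiffAt.comp x (contDiffAt_norm ℝ hx)).congr_of_eventuallyEq (hDφ x hx)
  obtain ⟨C, hC, hbound⟩ :=
    exists_norm_fderiv_fderiv_comp_norm_le (E := EuclideanSpace ℝ (Fin 3)) hφ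
  refine ⟨fun x hx => (hsmooth x hx).differentiableAt two_ne_zero,
    fun x hx => ((hsmooth x hx).fderiv_right le_rfl).differentiableAt one_ne_zero,
    C, hC, fun x hx0 hx1 => ?_⟩
  rw [(hDφ x (norm_pos_iff.1 hx0)).fderiv.fderiv_eq]
  exact hbound x hx0 hx1
end

section
/- With N scatterer components and the block operators defined in the context, let u = (u_1,…,u_N) and u^{inc} = (u^{inc}_1,…,u^{inc}_N) with u_k, u^{inc}_k ∈ V_k. Assume: (i) the exterior representation formula C^{ext} u = −u^{inc}, i.e., for every j, Σ_k (A^{(0)}_{jk} − ½ I_{jk}) u_k = −u^{inc}_j; (ii) the interior representation formula (A^{(k)}_{kk} + ½ id) u_k = 0 for every k; and (iii) the extinction property (A^{(k)}_{jk} − ½ I_{jk}) u_k = 0 for every j ≠ k. Then u satisfies the global multi-trace Müller equation M u = B₀ u^{inc}, i.e., for every row index j, Σ_k [M]_{jk} u_k = β₀ u^{inc}_j, where M := B ∘ Ĉ^{int} − B₀ ∘ C^{ext}. -/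
/-- Componentwise material scaling β = diag(a, b) on a space of Cauchy-data pairs:
(e, h) ↦ (a•e, b•h). -/
noncomputable def matScal {W : Type*} [AddCommGroup W] [Module ℂ W] (a b : ℂ) :
    (W × W) →ₗ[ℂ] (W × W) :=
  LinearMap.prodMap (a • (LinearMap.id : W →ₗ[ℂ] W)) (b • (LinearMap.id : W →ₗ[ℂ] W))

/-- If u satisfies (i) the exterior representation formula C^{ext} u = −u^{inc},
(ii) the interior representation formula (A^{(k)}_{kk} + ½ id) u_k = 0 for every k, and
(iii) the extinction property (A^{(k)}_{jk} − ½ I_{jk}) u_k = 0 for j ≠ k, then u satisfies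
the global multi-trace Müller equation M u = B₀ u^{inc}, where
M = B ∘ Ĉ^{int} − B₀ ∘ C^{ext}: for every row j, Σ_k [M]_{jk} u_k = β₀ u^{inc}_j. -/
theorem multitrace_mueller_equation_solution
    (N : ℕ) (hN : 1 ≤ N)
    (W : Fin N → Type) [∀ k, AddCommGroup (W k)] [∀ k, Module ℂ (W k)]
    (ε μ : Fin (N + 1) → ℂ) (hε : ∀ i, ε i ≠ 0) (hμ : ∀ i, μ i ≠ 0)
    (A : Fin (N + 1) → ∀ j k : Fin N, (W k × W k) →ₗ[ℂ] (W j × W j))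
    (g : ∀ j k : Fin N, W k →ₗ[ℂ] W j) (hg : ∀ k, g k k = LinearMap.id)
    (Cinth : ∀ j k : Fin N, (W k × W k) →ₗ[ℂ] (W j × W j))
    (hCinthDiag : ∀ k, Cinth k k = A k.succ k k + (1 / 2 : ℂ) • LinearMap.id)
    (hCinthOff : ∀ j k, j ≠ k → Cinth j k =
      matScal (ε j.succ)⁻¹ (μ j.succ)⁻¹ ∘ₗ matScal (ε k.succ) (μ k.succ) ∘ₗ
        (A k.succ j k - (1 / 2 : ℂ) • LinearMap.prodMap (g j k) (g j k)))
    (M : ∀ j k : Fin N, (W k × W k) →ₗ[ℂ] (W j × W j))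
    (hM : ∀ j k, M j k =
      matScal (ε j.succ) (μ j.succ) ∘ₗ Cinth j k -
      matScal (ε 0) (μ 0) ∘ₗ
        (A 0 j k - (1 / 2 : ℂ) • LinearMap.prodMap (g j k) (g j k)))
    (u uinc : ∀ k : Fin N, W k × W k)
    (hextRep : ∀ j : Fin N,
      ∑ k : Fin N,
        (A 0 j k (u k) -
          (1 / 2 : ℂ) • LinearMap.prodMap (g j k) (g j k) (u k)) = -uinc j)
    (hint : ∀ k : Fin N, A k.succ k k (u k) + (1 / 2 : ℂ) • u k = 0)
    (hext : ∀ j k : Fin N, j ≠ k →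
      A k.succ j k (u k) -
        (1 / 2 : ℂ) • LinearMap.prodMap (g j k) (g j k) (u k) = 0) :
    ∀ j : Fin N,
      ∑ k : Fin N, M j k (u k) = matScal (ε 0) (μ 0) (uinc j) := by
  intro j
  have key : ∀ k, M j k (u k) =
      matScal (ε 0) (μ 0) (-(A 0 j k (u k) -
        (1 / 2 : ℂ) • LinearMap.prodMap (g j k) (g j k) (u k))) := by
    intro k
    rw [hM]
    have hz : Cinth j k (u k) = 0 := by
      by_cases h : j = k
      · subst h
        rw [hCinthDiag]
        simpa using hint j
      · rw [hCinthOff j k h, LinearMap.comp_apply, LinearMap.comp_apply,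
          LinearMap.sub_apply, LinearMap.smul_apply, hext j k h, map_zero, map_zero]
    simp [hz, LinearMap.sub_apply]
  calc ∑ k, M j k (u k)
      = ∑ k, matScal (ε 0) (μ 0) (-(A 0 j k (u k) -
          (1 / 2 : ℂ) • LinearMap.prodMap (g j k) (g j k) (u k))) :=
        Finset.sum_congr rfl fun k _ => key k
    _ = matScal (ε 0) (μ 0) (-(∑ k, (A 0 j k (u k) -
          (1 / 2 : ℂ) • LinearMap.prodMap (g j k) (g j k) (u k)))) := by
        rw [map_neg, map_sum]; simp
    _ = matScal (ε 0) (μ 0) (uinc j) := by rw [hextRep j, neg_neg]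
end

section
/- With N scatterer components and the block operators defined in the context, suppose u = (u_1,…,u_N) satisfies the extinction property (A^{(k)}_{jk} − ½ I_{jk}) u_k = 0 for every pair j ≠ k. Then the global multi-trace Müller operator and the naive weighted-combination operator agree on u: M u = Q u, where M := B ∘ Ĉ^{int} − B₀ ∘ C^{ext} and Q := B ∘ C^{int} − B₀ ∘ C^{ext}. Consequently, if in addition C^{ext} u = −u^{inc} and (A^{(k)}_{kk} + ½ id) u_k = 0 for all k, then u also satisfies Q u = B₀ u^{inc}. -/
/-- If u satisfies the extinction property (A^{(k)}_{jk} − ½ I_{jk}) u_k = 0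
for every j ≠ k, then the global multi-trace Müller operator M = B ∘ Ĉ^{int} − B₀ ∘ C^{ext}
and the naive weighted-combination operator Q = B ∘ C^{int} − B₀ ∘ C^{ext} agree on u:
M u = Q u. Consequently, if in addition C^{ext} u = −u^{inc} and
(A^{(k)}_{kk} + ½ id) u_k = 0 for all k, then also Q u = B₀ u^{inc}. -/
theorem mueller_and_naive_operators_agree_on_solutions
    (N : ℕ) (hN : 1 ≤ N)
    (W : Fin N → Type) [∀ k, AddCommGroup (W k)] [∀ k, Module ℂ (W k)]
    (ε μ : Fin (N + 1) → ℂ) (hε : ∀ i, ε i ≠ 0) (hμ : ∀ i, μ i ≠ 0)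
    (A : Fin (N + 1) → ∀ j k : Fin N, (W k × W k) →ₗ[ℂ] (W j × W j))
    (g : ∀ j k : Fin N, W k →ₗ[ℂ] W j) (hg : ∀ k, g k k = LinearMap.id)
    (Cint : ∀ j k : Fin N, (W k × W k) →ₗ[ℂ] (W j × W j))
    (hCintDiag : ∀ k, Cint k k = A k.succ k k + (1 / 2 : ℂ) • LinearMap.id)
    (hCintOff : ∀ j k, j ≠ k → Cint j k = 0)
    (Cinth : ∀ j k : Fin N, (W k × W k) →ₗ[ℂ] (W j × W j))
    (hCinthDiag : ∀ k, Cinth k k = A k.succ k k + (1 / 2 : ℂ) • LinearMap.id)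
    (hCinthOff : ∀ j k, j ≠ k → Cinth j k =
      matScal (ε j.succ)⁻¹ (μ j.succ)⁻¹ ∘ₗ matScal (ε k.succ) (μ k.succ) ∘ₗ
        (A k.succ j k - (1 / 2 : ℂ) • LinearMap.prodMap (g j k) (g j k)))
    (M Q : ∀ j k : Fin N, (W k × W k) →ₗ[ℂ] (W j × W j))
    (hM : ∀ j k, M j k =
      matScal (ε j.succ) (μ j.succ) ∘ₗ Cinth j k -
      matScal (ε 0) (μ 0) ∘ₗ
        (A 0 j k - (1 / 2 : ℂ) • LinearMap.prodMap (g j k) (g j k)))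
    (hQ : ∀ j k, Q j k =
      matScal (ε j.succ) (μ j.succ) ∘ₗ Cint j k -
      matScal (ε 0) (μ 0) ∘ₗ
        (A 0 j k - (1 / 2 : ℂ) • LinearMap.prodMap (g j k) (g j k)))
    (u : ∀ k : Fin N, W k × W k)
    (hext : ∀ j k : Fin N, j ≠ k →
      A k.succ j k (u k) -
        (1 / 2 : ℂ) • LinearMap.prodMap (g j k) (g j k) (u k) = 0) :
    (∀ j : Fin N, ∑ k : Fin N, M j k (u k) = ∑ k : Fin N, Q j k (u k)) ∧
    (∀ uinc : ∀ k : Fin N, W k × W k,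
      (∀ j : Fin N,
        ∑ k : Fin N,
          (A 0 j k (u k) -
            (1 / 2 : ℂ) • LinearMap.prodMap (g j k) (g j k) (u k)) = -uinc j) →
      (∀ k : Fin N, A k.succ k k (u k) + (1 / 2 : ℂ) • u k = 0) →
      ∀ j : Fin N, ∑ k : Fin N, Q j k (u k) = matScal (ε 0) (μ 0) (uinc j)) := by
  have hMQ : ∀ j k, M j k (u k) = Q j k (u k) := by
    intro j k
    rcases eq_or_ne j k with h | h
    · subst h; rw [hM, hQ, hCinthDiag, hCintDiag]
    · rw [hM, hQ, hCinthOff j k h, hCintOff j k h]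
      simp only [LinearMap.sub_apply, LinearMap.comp_apply, LinearMap.zero_apply,
        LinearMap.map_zero, map_zero]
      congr 1
      have h0 : A k.succ j k (u k) -
          ((1 / 2 : ℂ) • LinearMap.prodMap (g j k) (g j k)) (u k) = 0 := by
        simpa using hext j k h
      rw [h0]
      simp
  refine ⟨fun j => Finset.sum_congr rfl (fun k _ => hMQ j k), ?_⟩
  intro uinc hinc hdiag j
  have hQapp : ∀ k, Q j k (u k) =
      matScal (ε j.succ) (μ j.succ) (Cint j k (u k)) -
      matScal (ε 0) (μ 0) (A 0 j k (u k) -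
        (1 / 2 : ℂ) • LinearMap.prodMap (g j k) (g j k) (u k)) := by
    intro k
    rw [hQ]
    simp [LinearMap.sub_apply, LinearMap.comp_apply]
  calc ∑ k, Q j k (u k)
      = ∑ k, (matScal (ε j.succ) (μ j.succ) (Cint j k (u k)) -
          matScal (ε 0) (μ 0) (A 0 j k (u k) -
            (1 / 2 : ℂ) • LinearMap.prodMap (g j k) (g j k) (u k))) :=
        Finset.sum_congr rfl (fun k _ => hQapp k)
    _ = (∑ k, matScal (ε j.succ) (μ j.succ) (Cint j k (u k))) -
        matScal (ε 0) (μ 0) (∑ k, (A 0 j k (u k) -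
          (1 / 2 : ℂ) • LinearMap.prodMap (g j k) (g j k) (u k))) := by
        rw [Finset.sum_sub_distrib, map_sum]
    _ = matScal (ε 0) (μ 0) (uinc j) := by
        rw [hinc j]
        have h1 : ∀ k : Fin N, matScal (ε j.succ) (μ j.succ) (Cint j k (u k)) = 0 := by
          intro k
          rcases eq_or_ne j k with h | h
          · subst h
            rw [hCintDiag]
            simp only [LinearMap.add_apply, LinearMap.smul_apply, LinearMap.id_apply]
            rw [show A j.succ j j (u j) + (1 / 2 : ℂ) • u j = 0 from hdiag j]
            simp
          · rw [hCintOff j k h]; simp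
        rw [Finset.sum_congr rfl (fun k _ => h1 k)]
        simp
end

section
/- With N scatterer components and the block operators defined in the context, fix a component index k and suppose it is filled with the background medium: ε_k = ε₀, μ_k = μ₀ (so β_k = β₀), and A^{(k)}_{jk} = A^{(0)}_{jk} for every j = 1,…,N. Then in the global multi-trace Müller operator M := B ∘ Ĉ^{int} − B₀ ∘ C^{ext}, all off-diagonal blocks in the k-th column vanish, [M]_{jk} = 0 for every j ≠ k, and the diagonal block reduces to the background scaling, [M]_{kk} = β₀, i.e., (e, h) ↦ (ε₀ e, μ₀ h). -/
lemma matScal_comp {W : Type*} [AddCommGroup W] [Module ℂ W] (a b c d : ℂ) :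
    (matScal a b : (W × W) →ₗ[ℂ] (W × W)) ∘ₗ matScal c d = matScal (a * c) (b * d) := by
  ext x <;> simp [matScal, mul_smul, smul_comm a c, smul_comm b d]

lemma matScal_one {W : Type*} [AddCommGroup W] [Module ℂ W] :
    (matScal 1 1 : (W × W) →ₗ[ℂ] (W × W)) = LinearMap.id := by
  ext x <;> simp [matScal]

/-- If a fixed component k₀ is filled with the background medium
(ε_{k₀} = ε₀, μ_{k₀} = μ₀, so β_{k₀} = β₀, and A^{(k₀)}_{j k₀} = A^{(0)}_{j k₀} for all j),
then in the global multi-trace Müller operator M = B ∘ Ĉ^{int} − B₀ ∘ C^{ext} all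
off-diagonal blocks of the k₀-th column vanish, [M]_{j k₀} = 0 for j ≠ k₀, and the diagonal
block reduces to the background scaling, [M]_{k₀ k₀} = β₀ : (e, h) ↦ (ε₀ e, μ₀ h). -/
theorem background_filled_component_column
    (N : ℕ) (hN : 1 ≤ N)
    (W : Fin N → Type) [∀ k, AddCommGroup (W k)] [∀ k, Module ℂ (W k)]
    (ε μ : Fin (N + 1) → ℂ) (hε : ∀ i, ε i ≠ 0) (hμ : ∀ i, μ i ≠ 0)
    (A : Fin (N + 1) → ∀ j k : Fin N, (W k × W k) →ₗ[ℂ] (W j × W j))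
    (g : ∀ j k : Fin N, W k →ₗ[ℂ] W j) (hg : ∀ k, g k k = LinearMap.id)
    (Cinth : ∀ j k : Fin N, (W k × W k) →ₗ[ℂ] (W j × W j))
    (hCinthDiag : ∀ k, Cinth k k = A k.succ k k + (1 / 2 : ℂ) • LinearMap.id)
    (hCinthOff : ∀ j k, j ≠ k → Cinth j k =
      matScal (ε j.succ)⁻¹ (μ j.succ)⁻¹ ∘ₗ matScal (ε k.succ) (μ k.succ) ∘ₗ
        (A k.succ j k - (1 / 2 : ℂ) • LinearMap.prodMap (g j k) (g j k)))
    (M : ∀ j k : Fin N, (W k × W k) →ₗ[ℂ] (W j × W j))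
    (hM : ∀ j k, M j k =
      matScal (ε j.succ) (μ j.succ) ∘ₗ Cinth j k -
      matScal (ε 0) (μ 0) ∘ₗ
        (A 0 j k - (1 / 2 : ℂ) • LinearMap.prodMap (g j k) (g j k)))
    (k₀ : Fin N)
    (hεk : ε k₀.succ = ε 0) (hμk : μ k₀.succ = μ 0)
    (hA : ∀ j : Fin N, A k₀.succ j k₀ = A 0 j k₀) :
    (∀ j : Fin N, j ≠ k₀ → M j k₀ = 0) ∧
    M k₀ k₀ = matScal (ε 0) (μ 0) := by
  constructor
  · intro j hj
    rw [hM, hCinthOff j k₀ hj, hA, hεk, hμk, ← LinearMap.comp_assoc,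
      ← LinearMap.comp_assoc, matScal_comp,
      mul_inv_cancel₀ (hε j.succ), mul_inv_cancel₀ (hμ j.succ), matScal_one,
      LinearMap.id_comp, sub_self]
  · rw [hM, hCinthDiag, hA, hg, hεk, hμk]
    ext x <;> simp [matScal, smul_sub, smul_smul] <;> module
end
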